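/- arXiv:0706.2153 — 2 statements merged into one kernel-verified Lean document; each statement's English description precedes it below -/
import Mathlib

section
/- Let K be a compact subset of ℝⁿ. The function v_K : ℝⁿ → ℝ defined by v_K(x) = ‖x‖² − d_K(x)² is convex, and at Lebesgue-almost every x ∈ ℝⁿ it is differentiable with gradient ∇v_K(x) = 2 p_K(x), where p_K(x) is the unique nearest point of K to x. -/
/-!
For `p ∈ K`, the affine function `y ↦ 2 ⟪p, y⟫ - ‖p‖²` equals `‖y‖² - ‖y - p‖²`, so it lies
below `v_K y = ‖y‖² - d_K(y)²`, and touches it at every `x` of which `p` is a nearest point.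
Hence `v_K` is a supremum of affine functions attained at every point, so convex. Rademacher's
theorem makes the Lipschitz function `d_K`, and with it `v_K`, differentiable almost everywhere;
at such an `x` every affine minorant touching `v_K` at `x` has the same gradient as `v_K`, so
every nearest point `p` satisfies `∇v_K(x) = 2p`, which also forces the nearest point to be unique.
-/

open MeasureTheory Metric Set Filter Topology InnerProductSpace
open scoped RealInnerProductSpace

theorem convexOn_univ_of_forall_exists_linear_add_const_le {E : Type*} [AddCommGroup E]
    [Module ℝ E] {f : E → ℝ}
    (h : ∀ z, ∃ (L : E →ₗ[ℝ] ℝ) (c : ℝ), (∀ y, L y + c ≤ f y) ∧ L z + c = f z) :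
    ConvexOn ℝ univ f := by
  refine ⟨convex_univ, fun x _ y _ a b ha hb hab => ?_⟩
  obtain ⟨L, c, hle, heq⟩ := h (a • x + b • y)
  calc f (a • x + b • y) = a * (L x + c) + b * (L y + c) := by
        rw [← heq, map_add, map_smul, map_smul, smul_eq_mul, smul_eq_mul]
        linear_combination c * hab.symm
    _ ≤ a * f x + b * f y := by gcongr <;> apply hle

theorem DifferentiableAt.hasFDerivAt_of_eventuallyLE {E : Type*} [NormedAddCommGroup E]
    [NormedSpace ℝ E] {f g : E → ℝ} {g' : E →L[ℝ] ℝ} {x : E} (hf : DifferentiableAt ℝ f x)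
    (hg : HasFDerivAt g g' x) (hle : g ≤ᶠ[𝓝 x] f) (heq : g x = f x) : HasFDerivAt f g' x := by
  have hmin : IsLocalMin (f - g) x :=
    hle.mono fun y hy => by simp only [Pi.sub_apply]; linarith
  have hzero : fderiv ℝ f x - g' = 0 := hmin.hasFDerivAt_eq_zero (hf.hasFDerivAt.sub hg)
  rw [← sub_eq_zero.mp hzero]
  exact hf.hasFDerivAt

section

variable {F : Type*} [NormedAddCommGroup F] [InnerProductSpace ℝ F] {K : Set F}

theorem hasGradientAt_inner_add_const [CompleteSpace F] (g : F) (c : ℝ) (x : F) :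
    HasGradientAt (fun y => ⟪g, y⟫ + c) g x := by
  rw [hasGradientAt_iff_hasFDerivAt]
  exact (toDual ℝ F g).hasFDerivAt.add_const c

theorem sq_norm_sub_sq_dist (y p : F) :
    ‖y‖ ^ 2 - dist y p ^ 2 = ⟪(2 : ℝ) • p, y⟫ - ‖p‖ ^ 2 := by
  rw [dist_eq_norm, norm_sub_sq_real, real_inner_smul_left, real_inner_comm]
  ring

theorem inner_sub_le_sq_norm_sub_sq_infDist {p : F} (hp : p ∈ K) (y : F) :
    ⟪(2 : ℝ) • p, y⟫ - ‖p‖ ^ 2 ≤ ‖y‖ ^ 2 - infDist y K ^ 2 := by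
  rw [← sq_norm_sub_sq_dist]
  gcongr
  · exact infDist_nonneg
  · exact infDist_le_dist_of_mem hp

theorem sq_norm_sub_sq_infDist_eq_inner_sub {p x : F} (hx : dist x p = infDist x K) :
    ‖x‖ ^ 2 - infDist x K ^ 2 = ⟪(2 : ℝ) • p, x⟫ - ‖p‖ ^ 2 := by
  rw [← hx, sq_norm_sub_sq_dist]

theorem convexOn_sq_norm_sub_sq_infDist (hK : IsCompact K) (hne : K.Nonempty) :
    ConvexOn ℝ univ fun x => ‖x‖ ^ 2 - infDist x K ^ 2 := by
  refine convexOn_univ_of_forall_exists_linear_add_const_le fun z => ?_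
  obtain ⟨p, hp, hzp⟩ := hK.exists_infDist_eq_dist hne z
  exact ⟨innerₛₗ ℝ ((2 : ℝ) • p), -‖p‖ ^ 2, fun y => inner_sub_le_sq_norm_sub_sq_infDist hp y,
    (sq_norm_sub_sq_infDist_eq_inner_sub hzp.symm).symm⟩

theorem hasGradientAt_sq_norm_sub_sq_infDist [CompleteSpace F] {p x : F}
    (hd : DifferentiableAt ℝ (infDist · K) x) (hp : p ∈ K) (hx : dist x p = infDist x K) :
    HasGradientAt (fun y => ‖y‖ ^ 2 - infDist y K ^ 2) ((2 : ℝ) • p) x := by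
  have hv : DifferentiableAt ℝ (fun y => ‖y‖ ^ 2 - infDist y K ^ 2) x :=
    (differentiableAt_id.norm_sq ℝ).sub (hd.pow 2)
  rw [hasGradientAt_iff_hasFDerivAt]
  exact hv.hasFDerivAt_of_eventuallyLE
    ((hasGradientAt_inner_add_const ((2 : ℝ) • p) (-‖p‖ ^ 2) x).hasFDerivAt)
    (Eventually.of_forall fun y => inner_sub_le_sq_norm_sub_sq_infDist hp y)
    (sq_norm_sub_sq_infDist_eq_inner_sub hx).symm

theorem ae_hasGradientAt_sq_norm_sub_sq_infDist [FiniteDimensional ℝ F] [MeasurableSpace F]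
    [BorelSpace F] (μ : Measure F) [μ.IsAddHaarMeasure] (K : Set F) :
    ∀ᵐ x ∂μ, ∀ p ∈ K, dist x p = infDist x K →
      HasGradientAt (fun y => ‖y‖ ^ 2 - infDist y K ^ 2) ((2 : ℝ) • p) x := by
  filter_upwards [(lipschitz_infDist_pt K).ae_differentiableAt] with x hd p hp hx
  exact hasGradientAt_sq_norm_sub_sq_infDist hd hp hx

end

theorem stmt5 (n : ℕ) (K : Set (EuclideanSpace ℝ (Fin n))) (hK : IsCompact K)
    (hne : K.Nonempty) :
    ConvexOn ℝ Set.univ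
      (fun x : EuclideanSpace ℝ (Fin n) => ‖x‖ ^ 2 - Metric.infDist x K ^ 2) ∧
    ∀ᵐ x : EuclideanSpace ℝ (Fin n) ∂volume,
      ∃ p, p ∈ K ∧ dist x p = Metric.infDist x K ∧
        (∀ q ∈ K, dist x q = Metric.infDist x K → q = p) ∧
        HasGradientAt
          (fun y : EuclideanSpace ℝ (Fin n) => ‖y‖ ^ 2 - Metric.infDist y K ^ 2)
          ((2 : ℝ) • p) x := by
  refine ⟨convexOn_sq_norm_sub_sq_infDist hK hne, ?_⟩
  filter_upwards [ae_hasGradientAt_sq_norm_sub_sq_infDist volume K] with x hgrad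
  obtain ⟨p, hp, hxp⟩ := hK.exists_infDist_eq_dist hne x
  exact ⟨p, hp, hxp.symm,
    fun q hq hxq =>
      smul_right_injective _ two_ne_zero ((hgrad q hq hxq).unique (hgrad p hp hxp.symm)),
    hgrad p hp hxp.symm⟩
end

section
/- Let I ⊆ ℝ be an interval and f : I → ℝ a nondecreasing function with diam f(I) ≤ k. Let F ⊆ I × ℝ be the completed graph of f, i.e. the set of points (x, y) with lim_{t→x⁻} f(t) ≤ y ≤ lim_{t→x⁺} f(t). Then for every r > 0, the area of the r-neighborhood of F in ℝ² satisfies H²(F^r) ≤ 3π (ℓ(I) + k + r) · r, where ℓ(I) is the length of I. -/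
open MeasureTheory Metric Set
open scoped ENNReal NNReal Classical

/-- The left limit of a monotone function `f` on the interval `I` at `x`:
the supremum of the values of `f` at points of `I` to the left of `x`
(equal to `f x` when there are no such points, e.g. at the left endpoint). -/
noncomputable def leftVal (I : Set ℝ) (f : ℝ → ℝ) (x : ℝ) : ℝ :=
  if (I ∩ Set.Iio x).Nonempty then sSup (f '' (I ∩ Set.Iio x)) else f x

/-- The right limit of a monotone function `f` on the interval `I` at `x`. -/
noncomputable def rightVal (I : Set ℝ) (f : ℝ → ℝ) (x : ℝ) : ℝ :=
  if (I ∩ Set.Ioi x).Nonempty then sInf (f '' (I ∩ Set.Ioi x)) else f x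

/-- The completed graph of `f` on `I`, as a subset of the Euclidean plane:
the points `(x, y)` with `x ∈ I` and `lim_{t → x⁻} f(t) ≤ y ≤ lim_{t → x⁺} f(t)`. -/
def completedGraph (I : Set ℝ) (f : ℝ → ℝ) : Set (EuclideanSpace ℝ (Fin 2)) :=
  {p | p 0 ∈ I ∧ leftVal I f (p 0) ≤ p 1 ∧ p 1 ≤ rightVal I f (p 0)}


/-!
Any two points of the completed graph of a nondecreasing function are ordered coordinatewise.
Hence a piece of it on which `x + y` varies in an interval of length `δ` has a bounding box of
half-perimeter at most `δ`, so it lies in a ball of radius `δ / 2`. As `x + y` varies by at most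
`L = diam I + k` on the graph, cutting it into `⌊L / 2r⌋ + 1` such pieces of width `δ < 2r` covers
its `r`-neighbourhood by as many balls of radius `r + δ / 2`, of total area at most `3π (L + r) r`.
-/

local notation "ℝ²" => EuclideanSpace ℝ (Fin 2)

lemma dist_le_of_abs_sub_le {p c : ℝ²} {u v : ℝ} (h0 : |p 0 - c 0| ≤ u) (h1 : |p 1 - c 1| ≤ v) :
    dist p c ≤ u + v := by
  have hu : 0 ≤ u := (abs_nonneg _).trans h0
  have hv : 0 ≤ v := (abs_nonneg _).trans h1
  rw [EuclideanSpace.dist_eq, Fin.sum_univ_two, Real.dist_eq, Real.dist_eq,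
    Real.sqrt_le_left (by positivity)]
  nlinarith [sq_abs (p 0 - c 0), sq_abs (p 1 - c 1), abs_nonneg (p 0 - c 0),
    abs_nonneg (p 1 - c 1)]

lemma exists_subset_closedBall_of_add_mem_Icc {A : Set ℝ²} {σ d : ℝ}
    (h : ∀ p ∈ A, ∀ q ∈ A, p 0 + q 1 ∈ Icc σ (σ + d)) : ∃ c, A ⊆ closedBall c (d / 2) := by
  rcases A.eq_empty_or_nonempty with rfl | ⟨w, hw⟩
  · exact ⟨0, empty_subset _⟩
  have : Nonempty A := ⟨⟨w, hw⟩⟩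
  set x : A → ℝ := fun p => p.1 0
  set y : A → ℝ := fun p => p.1 1
  have hxa : BddAbove (range x) := ⟨σ + d - w 1, by rintro _ ⟨p, rfl⟩; linarith [(h p p.2 w hw).2]⟩
  have hxb : BddBelow (range x) := ⟨σ - w 1, by rintro _ ⟨p, rfl⟩; linarith [(h p p.2 w hw).1]⟩
  have hya : BddAbove (range y) := ⟨σ + d - w 0, by rintro _ ⟨q, rfl⟩; linarith [(h w hw q q.2).2]⟩
  have hyb : BddBelow (range y) := ⟨σ - w 0, by rintro _ ⟨q, rfl⟩; linarith [(h w hw q q.2).1]⟩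
  have hsup : iSup x + iSup y ≤ σ + d := ciSup_add_ciSup_le fun p q => (h p p.2 q q.2).2
  have hinf : σ ≤ iInf x + iInf y := le_ciInf_add_ciInf fun p q => (h p p.2 q q.2).1
  refine ⟨!₂[(iInf x + iSup x) / 2, (iInf y + iSup y) / 2], fun p hp => ?_⟩
  have hx := ciInf_le hxb (⟨p, hp⟩ : A)
  have hx' := le_ciSup hxa (⟨p, hp⟩ : A)
  have hy := ciInf_le hyb (⟨p, hp⟩ : A)
  have hy' := le_ciSup hya (⟨p, hp⟩ : A)
  refine (dist_le_of_abs_sub_le (u := (iSup x - iInf x) / 2) (v := (iSup y - iInf y) / 2)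
    ?_ ?_).trans (by linarith)
  all_goals
    rw [abs_le]
    constructor <;> simp <;> linarith

lemma Icc_subset_biUnion_Icc (a δ : ℝ) (hδ : 0 ≤ δ) (n : ℕ) :
    Icc a (a + (n + 1) * δ) ⊆ ⋃ j ∈ Finset.range (n + 1), Icc (a + j * δ) (a + (j + 1) * δ) := by
  induction n with
  | zero => simp
  | succ n ih =>
    rw [← Icc_union_Icc_eq_Icc (b := a + (n + 1) * δ) (by nlinarith) (by push_cast; nlinarith),
      Finset.range_add_one, Finset.set_biUnion_insert]
    push_cast
    exact union_subset (ih.trans subset_union_right) subset_union_left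

lemma cthickening_biUnion_finset {α ι : Type*} [PseudoEMetricSpace α] (δ : ℝ) (t : Finset ι)
    (s : ι → Set α) : cthickening δ (⋃ i ∈ t, s i) = ⋃ i ∈ t, cthickening δ (s i) := by
  classical
  induction t using Finset.induction_on with
  | empty => simp
  | insert i t _ ih => rw [Finset.set_biUnion_insert, cthickening_union, ih, Finset.set_biUnion_insert]

lemma volume_cthickening_le_of_subset_biUnion_closedBall {A : Set ℝ²} {t : Finset ℕ}
    {c : ℕ → ℝ²} {r ρ : ℝ} (hr : 0 ≤ r) (hρ : 0 ≤ ρ) (hA : A ⊆ ⋃ j ∈ t, closedBall (c j) ρ) :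
    volume (cthickening r A) ≤ ENNReal.ofReal (t.card * (r + ρ) ^ 2 * Real.pi) :=
  calc volume (cthickening r A)
      ≤ volume (⋃ j ∈ t, closedBall (c j) (r + ρ)) := by
        refine measure_mono ((cthickening_subset_of_subset r hA).trans_eq ?_)
        simp only [cthickening_biUnion_finset, cthickening_closedBall hr hρ]
    _ ≤ ∑ j ∈ t, volume (closedBall (c j) (r + ρ)) := measure_biUnion_finset_le _ _
    _ = ENNReal.ofReal (t.card * (r + ρ) ^ 2 * Real.pi) := by
        rw [Finset.sum_congr rfl fun j _ => EuclideanSpace.volume_closedBall_fin_two (c j) _,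
          Finset.sum_const, nsmul_eq_mul, ← ENNReal.ofReal_pow (by positivity),
          ← ENNReal.ofReal_mul (by positivity), ← ENNReal.ofReal_natCast,
          ← ENNReal.ofReal_mul (by positivity), mul_assoc]

def IsMonotoneSet (A : Set ℝ²) : Prop :=
  ∀ p ∈ A, ∀ q ∈ A, p 0 < q 0 → p 1 ≤ q 1

namespace IsMonotoneSet

variable {A : Set ℝ²}

lemma add_mem_uIcc (hA : IsMonotoneSet A) {p q : ℝ²} (hp : p ∈ A) (hq : q ∈ A) :
    p 0 + q 1 ∈ uIcc (p 0 + p 1) (q 0 + q 1) := by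
  rcases lt_trichotomy (p 0) (q 0) with h | h | h
  · have := hA p hp q hq h
    exact Icc_subset_uIcc ⟨by linarith, by linarith⟩
  · simp [h]
  · have := hA q hq p hp h
    exact Icc_subset_uIcc' ⟨by linarith, by linarith⟩

lemma exists_subset_closedBall (hA : IsMonotoneSet A) {σ d : ℝ}
    (hs : ∀ p ∈ A, p 0 + p 1 ∈ Icc σ (σ + d)) : ∃ c, A ⊆ closedBall c (d / 2) :=
  exists_subset_closedBall_of_add_mem_Icc fun p hp q hq =>
    uIcc_subset_Icc (hs p hp) (hs q hq) (hA.add_mem_uIcc hp hq)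

lemma mono (hA : IsMonotoneSet A) {B : Set ℝ²} (hB : B ⊆ A) : IsMonotoneSet B :=
  fun p hp q hq => hA p (hB hp) q (hB hq)

lemma exists_subset_biUnion_closedBall (hA : IsMonotoneSet A) {m δ : ℝ} (hδ : 0 ≤ δ) (n : ℕ)
    (hs : ∀ p ∈ A, p 0 + p 1 ∈ Icc m (m + (n + 1) * δ)) :
    ∃ c : ℕ → ℝ², A ⊆ ⋃ j ∈ Finset.range (n + 1), closedBall (c j) (δ / 2) := by
  have hslab (j : ℕ) : ∃ c, {p ∈ A | p 0 + p 1 ∈ Icc (m + j * δ) (m + j * δ + δ)} ⊆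
      closedBall c (δ / 2) :=
    (hA.mono (sep_subset _ _)).exists_subset_closedBall fun p hp => hp.2
  choose c hc using hslab
  refine ⟨c, fun p hp => ?_⟩
  obtain ⟨j, hj, hpj⟩ := mem_iUnion₂.1 (Icc_subset_biUnion_Icc m δ hδ n (hs p hp))
  exact mem_iUnion₂.2 ⟨j, hj, hc j ⟨hp, by rwa [add_one_mul, ← add_assoc] at hpj⟩⟩

end IsMonotoneSet

lemma mul_sq_add_half_le {N δ r : ℝ} (hN : 0 ≤ N) (hr : 0 ≤ r) (hδ₀ : 0 ≤ δ) (hδ : δ ≤ 2 * r)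
    (hNr : 2 * r * N ≤ N * δ + 2 * r) : N * (r + δ / 2) ^ 2 ≤ 3 * (N * δ + r) * r := by
  nlinarith [mul_le_mul_of_nonneg_left hδ (mul_nonneg hN hδ₀), mul_le_mul_of_nonneg_left hNr hr,
    mul_nonneg (mul_nonneg hN hδ₀) hr]

theorem IsMonotoneSet.volume_cthickening_le {A : Set ℝ²} (hA : IsMonotoneSet A) {m L r : ℝ}
    (hs : ∀ p ∈ A, p 0 + p 1 ∈ Icc m (m + L)) (hr : 0 < r) :
    volume (cthickening r A) ≤ ENNReal.ofReal (3 * Real.pi * (L + r) * r) := by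
  rcases A.eq_empty_or_nonempty with rfl | ⟨w, hw⟩
  · simp
  have hL : 0 ≤ L := by linarith [(hs w hw).1, (hs w hw).2]
  set n := ⌊L / (2 * r)⌋₊
  set δ := L / (n + 1)
  have hδ₀ : 0 ≤ δ := by positivity
  have hnδ : (n + 1) * δ = L := mul_div_cancel₀ L (by positivity)
  have hδ : δ ≤ 2 * r := by
    rw [div_le_iff₀ (by positivity), mul_comm, ← div_le_iff₀ (by positivity)]
    exact (Nat.lt_floor_add_one _).le
  have hn : 2 * r * n ≤ L := by
    rw [mul_comm, ← le_div_iff₀ (by positivity)]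
    exact Nat.floor_le (by positivity)
  obtain ⟨c, hc⟩ := hA.exists_subset_biUnion_closedBall hδ₀ n (by rwa [hnδ])
  refine (volume_cthickening_le_of_subset_biUnion_closedBall hr.le (by positivity) hc).trans
    (ENNReal.ofReal_le_ofReal ?_)
  have key := mul_sq_add_half_le (N := n + 1) (by positivity) hr.le hδ₀ hδ (by linarith)
  rw [hnδ] at key
  rw [Finset.card_range, Nat.cast_succ]
  nlinarith [mul_le_mul_of_nonneg_right key Real.pi_pos.le]

lemma exists_forall_mem_Icc_of_forall_sub_le {α : Type*} {s : Set α} (g : α → ℝ) {D : ℝ}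
    (h : ∀ a ∈ s, ∀ b ∈ s, g a - g b ≤ D) : ∃ m, ∀ a ∈ s, g a ∈ Icc m (m + D) := by
  rcases s.eq_empty_or_nonempty with rfl | ⟨w, hw⟩
  · simp
  have : Nonempty s := ⟨⟨w, hw⟩⟩
  have hbdd : BddBelow (range fun a : s => g a) :=
    ⟨g w - D, by rintro _ ⟨a, rfl⟩; linarith [h w hw a a.2]⟩
  refine ⟨⨅ a : s, g a, fun a ha => ⟨ciInf_le hbdd ⟨a, ha⟩, ?_⟩⟩
  have : g a - D ≤ ⨅ b : s, g b := le_ciInf fun b => by linarith [h a ha b b.2]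
  linarith

section CompletedGraph

variable {I : Set ℝ} {f : ℝ → ℝ}

lemma rightVal_le_apply (hf : MonotoneOn f I) {a t : ℝ} (ha : a ∈ I) (ht : t ∈ I) (hat : a < t) :
    rightVal I f a ≤ f t := by
  rw [rightVal, if_pos ⟨t, ht, hat⟩]
  refine csInf_le ⟨f a, ?_⟩ ⟨t, ⟨ht, hat⟩, rfl⟩
  rintro _ ⟨u, ⟨hu, hau⟩, rfl⟩
  exact hf ha hu hau.le

lemma apply_le_leftVal (hf : MonotoneOn f I) {b t : ℝ} (hb : b ∈ I) (ht : t ∈ I) (htb : t < b) :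
    f t ≤ leftVal I f b := by
  rw [leftVal, if_pos ⟨t, ht, htb⟩]
  refine le_csSup ⟨f b, ?_⟩ ⟨t, ⟨ht, htb⟩, rfl⟩
  rintro _ ⟨u, ⟨hu, hub⟩, rfl⟩
  exact hf hu hb hub.le

lemma rightVal_le_leftVal (hI : I.OrdConnected) (hf : MonotoneOn f I) {a b : ℝ} (ha : a ∈ I)
    (hb : b ∈ I) (hab : a < b) : rightVal I f a ≤ leftVal I f b := by
  have hm : (a + b) / 2 ∈ I := hI.out ha hb ⟨by linarith, by linarith⟩
  exact (rightVal_le_apply hf ha hm (by linarith)).trans (apply_le_leftVal hf hb hm (by linarith))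

lemma isMonotoneSet_completedGraph (hI : I.OrdConnected) (hf : MonotoneOn f I) :
    IsMonotoneSet (completedGraph I f) :=
  fun _ ⟨hp, _, hpr⟩ _ ⟨hq, hql, _⟩ hpq => hpr.trans ((rightVal_le_leftVal hI hf hp hq hpq).trans hql)

lemma exists_le_apply_of_mem_completedGraph (hf : MonotoneOn f I) {p : ℝ²}
    (hp : p ∈ completedGraph I f) : ∃ t ∈ I, p 1 ≤ f t := by
  obtain ⟨hpI, -, hpr⟩ := hp
  by_cases h : (I ∩ Ioi (p 0)).Nonempty
  · obtain ⟨t, ht, hpt⟩ := h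
    exact ⟨t, ht, hpr.trans (rightVal_le_apply hf hpI ht hpt)⟩
  · exact ⟨p 0, hpI, by rwa [rightVal, if_neg h] at hpr⟩

lemma exists_apply_le_of_mem_completedGraph (hf : MonotoneOn f I) {p : ℝ²}
    (hp : p ∈ completedGraph I f) : ∃ t ∈ I, f t ≤ p 1 := by
  obtain ⟨hpI, hpl, -⟩ := hp
  by_cases h : (I ∩ Iio (p 0)).Nonempty
  · obtain ⟨t, ht, htp⟩ := h
    exact ⟨t, ht, (apply_le_leftVal hf hpI ht htp).trans hpl⟩
  · exact ⟨p 0, hpI, by rwa [leftVal, if_neg h] at hpl⟩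

lemma add_sub_add_le_of_mem_completedGraph (hIb : Bornology.IsBounded I) (hf : MonotoneOn f I)
    {k : ℝ} (hk : ∀ a ∈ I, ∀ b ∈ I, |f a - f b| ≤ k) {p q : ℝ²} (hp : p ∈ completedGraph I f)
    (hq : q ∈ completedGraph I f) : (p 0 + p 1) - (q 0 + q 1) ≤ diam I + k := by
  obtain ⟨t, ht, hpt⟩ := exists_le_apply_of_mem_completedGraph hf hp
  obtain ⟨u, hu, huq⟩ := exists_apply_le_of_mem_completedGraph hf hq
  have hx := (le_abs_self _).trans (Real.dist_eq (p 0) (q 0) ▸ dist_le_diam_of_mem hIb hp.1 hq.1)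
  have hy := (le_abs_self _).trans (hk t ht u hu)
  linarith

end CompletedGraph

theorem stmt6 (I : Set ℝ) (hI : I.OrdConnected) (hIb : Bornology.IsBounded I)
    (f : ℝ → ℝ) (hf : MonotoneOn f I) (k : ℝ)
    (hk : ∀ a ∈ I, ∀ b ∈ I, |f a - f b| ≤ k)
    (r : ℝ) (hr : 0 < r) :
    volume (Metric.cthickening r (completedGraph I f)) ≤
      ENNReal.ofReal (3 * Real.pi * (Metric.diam I + k + r) * r) := by
  obtain ⟨m, hm⟩ := exists_forall_mem_Icc_of_forall_sub_le (fun p : ℝ² => p 0 + p 1)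
    fun p hp q hq => add_sub_add_le_of_mem_completedGraph hIb hf hk hp hq
  exact (isMonotoneSet_completedGraph hI hf).volume_cthickening_le hm hr
end
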